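/- Let P be a non-Σ modular operad and ς an internal non-Σ cyclic operad in it: ς(C) ∈ P(C; 0) for each cyclically ordered finite set C, equivariant and multiplicative under ∘_{u,v}. Then for ordered sets X, Y and fresh symbols u, v, u', u'', v', v'', and any decomposition X = X₁X₂, the element ξ_{u'u''} ς([X₂X₁ u' Y u'']) ∈ P([X],[Y]; 1) equals ξ_{v'v''} ς([X₁X₂ v'' Y v']); i.e., the genus-one element ξ_{uv} ς([X u Y v]) depends only on the cyclic orders [X] and [Y], not on the chosen linear representatives. -/

import Mathlib

/-- Multicyclically ordered sets with labels in `ℕ`: finite multisets of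
cyclically ordered components, each component a `Cycle ℕ` (a list of labels up
to rotation). -/
abbrev MCyc : Type := Multiset (Cycle ℕ)

/-- The underlying collection (non-Σ modular module) of a non-Σ modular operad
in `Set`/`Type`. -/
structure NsModData where
  P : MCyc → ℕ → Type

/-- Transport along propositional equalities of the indices. -/
def NsModData.pcast (O : NsModData) {S T : MCyc} {g h : ℕ}
    (hS : S = T) (hg : g = h) : O.P S g → O.P T h := by
  subst hS; subst hg; exact id

/-- The cyclically ordered set represented by the linear order `l`. -/
def oc (l : List ℕ) : Cycle ℕ := ↑l

/-- A (biased) non-Σ modular operad: compositions `∘_{u,v}` realised by pancake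
merging, contractions `ξ_{uv}` realised by pancake cutting (within one component,
or fusing two components), and a relabelling action; subject to axioms
(i)–(vii) of Definition `opet_podleham`.  Cyclically ordered sets are given by
linear representatives: `oc (X ++ [u])` is a cycle with distinguished last element
`u`, `oc (v :: Y)` one with distinguished first element `v`. -/
structure NsModOp extends NsModData where
  comp : ∀ (X Y : List ℕ) (u v : ℕ) (S' S'' : MCyc) (g' g'' : ℕ),
    P (oc (X ++ [u]) ::ₘ S') g' → P (oc (v :: Y) ::ₘ S'') g'' →
    P (oc (X ++ Y) ::ₘ (S' + S'')) (g' + g'')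
  xiSame : ∀ (I₁ I₂ : List ℕ) (u v : ℕ) (S : MCyc) (g : ℕ),
    P (oc (u :: I₁ ++ v :: I₂) ::ₘ S) g → P (oc I₁ ::ₘ oc I₂ ::ₘ S) (g + 1)
  xiDiff : ∀ (X Y : List ℕ) (u v : ℕ) (S : MCyc) (g : ℕ),
    P (oc (X ++ [u]) ::ₘ oc (v :: Y) ::ₘ S) g → P (oc (X ++ Y) ::ₘ S) (g + 1)
  ren : ∀ (σ : ℕ → ℕ), Function.Injective σ → ∀ (S : MCyc) (g : ℕ),
    P S g → P (S.map (Cycle.map σ)) g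
  /-- (i) symmetry of the compositions. -/
  comp_symm : ∀ X Y u v S' S'' g' g''
    (x : P (oc (X ++ [u]) ::ₘ S') g') (y : P (oc (v :: Y) ::ₘ S'') g'')
    (hy : ((oc (v :: Y)) ::ₘ S'') = oc (Y ++ [v]) ::ₘ S'')
    (hx : ((oc (X ++ [u])) ::ₘ S') = oc (u :: X) ::ₘ S')
    (hI : ((oc (Y ++ X)) ::ₘ (S'' + S')) = oc (X ++ Y) ::ₘ (S' + S''))
    (hg : g'' + g' = g' + g''),
    comp X Y u v S' S'' g' g'' x y
      = toNsModData.pcast hI hg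
          (comp Y X v u S'' S' g'' g'
            (toNsModData.pcast hy rfl y) (toNsModData.pcast hx rfl x))
  /-- (ii) associativity of the compositions. -/
  comp_assoc : ∀ (W A B D : List ℕ) (a b c d : ℕ) (S₁ S₂ S₃ : MCyc) g₁ g₂ g₃
    (x₁ : P (oc (W ++ [a]) ::ₘ S₁) g₁)
    (x₂ : P (oc (b :: (A ++ c :: B)) ::ₘ S₂) g₂)
    (x₃ : P (oc (d :: D) ::ₘ S₃) g₃)
    (h₁ : ((oc (W ++ (A ++ c :: B))) ::ₘ (S₁ + S₂))
        = oc ((B ++ W ++ A) ++ [c]) ::ₘ (S₁ + S₂))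
    (h₂ : ((oc (b :: (A ++ c :: B))) ::ₘ S₂)
        = oc ((B ++ b :: A) ++ [c]) ::ₘ S₂)
    (h₃ : ((oc ((B ++ b :: A) ++ D)) ::ₘ (S₂ + S₃))
        = oc (b :: (A ++ D ++ B)) ::ₘ (S₂ + S₃))
    (hI : ((oc (W ++ (A ++ D ++ B))) ::ₘ (S₁ + (S₂ + S₃)))
        = oc ((B ++ W ++ A) ++ D) ::ₘ ((S₁ + S₂) + S₃))
    (hg : g₁ + (g₂ + g₃) = (g₁ + g₂) + g₃),
    comp (B ++ W ++ A) D c d (S₁ + S₂) S₃ (g₁ + g₂) g₃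
        (toNsModData.pcast h₁ rfl (comp W (A ++ c :: B) a b S₁ S₂ g₁ g₂ x₁ x₂)) x₃
      = toNsModData.pcast hI hg
          (comp W (A ++ D ++ B) a b S₁ (S₂ + S₃) g₁ (g₂ + g₃) x₁
            (toNsModData.pcast h₃ rfl
              (comp (B ++ b :: A) D c d S₂ S₃ g₂ g₃
                (toNsModData.pcast h₂ rfl x₂) x₃)))
  /-- (iii) contractions commute. -/
  xi_xi : ∀ (I₁ I₂ J₁ J₂ : List ℕ) (a b c d : ℕ) (S : MCyc) g
    (x : P (oc (a :: I₁ ++ b :: I₂) ::ₘ oc (c :: J₁ ++ d :: J₂) ::ₘ S) g)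
    (h₁ : ((oc I₁) ::ₘ oc I₂ ::ₘ oc (c :: J₁ ++ d :: J₂) ::ₘ S)
        = oc (c :: J₁ ++ d :: J₂) ::ₘ oc I₁ ::ₘ oc I₂ ::ₘ S)
    (h₂ : ((oc (a :: I₁ ++ b :: I₂)) ::ₘ oc (c :: J₁ ++ d :: J₂) ::ₘ S)
        = oc (c :: J₁ ++ d :: J₂) ::ₘ oc (a :: I₁ ++ b :: I₂) ::ₘ S)
    (h₃ : ((oc J₁) ::ₘ oc J₂ ::ₘ oc (a :: I₁ ++ b :: I₂) ::ₘ S)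
        = oc (a :: I₁ ++ b :: I₂) ::ₘ oc J₁ ::ₘ oc J₂ ::ₘ S)
    (hI : ((oc I₁) ::ₘ oc I₂ ::ₘ oc J₁ ::ₘ oc J₂ ::ₘ S)
        = oc J₁ ::ₘ oc J₂ ::ₘ oc I₁ ::ₘ oc I₂ ::ₘ S),
    xiSame J₁ J₂ c d (oc I₁ ::ₘ oc I₂ ::ₘ S) (g + 1)
        (toNsModData.pcast h₁ rfl (xiSame I₁ I₂ a b (oc (c :: J₁ ++ d :: J₂) ::ₘ S) g x))
      = toNsModData.pcast hI rfl
          (xiSame I₁ I₂ a b (oc J₁ ::ₘ oc J₂ ::ₘ S) (g + 1)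
            (toNsModData.pcast h₃ rfl
              (xiSame J₁ J₂ c d (oc (a :: I₁ ++ b :: I₂) ::ₘ S) g
                (toNsModData.pcast h₂ rfl x))))
  /-- (iv) interchange between a contraction and a composition:
  `ξ_{ab}(x ∘_{cd} y) = ξ_{cd}(x ∘_{ab} y)` for `a, c` in the cycle of `x` and
  `b, d` in the cycle of `y`. -/
  xi_comp : ∀ (A₁ A₂ B₁ B₂ : List ℕ) (a b c d : ℕ) (S' S'' : MCyc) g' g''
    (x : P (oc ((A₁ ++ a :: A₂) ++ [c]) ::ₘ S') g')
    (y : P (oc (d :: (B₁ ++ b :: B₂)) ::ₘ S'') g'')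
    (h₁ : ((oc ((A₁ ++ a :: A₂) ++ (B₁ ++ b :: B₂))) ::ₘ (S' + S''))
        = oc (a :: (A₂ ++ B₁) ++ b :: (B₂ ++ A₁)) ::ₘ (S' + S''))
    (hx : ((oc ((A₁ ++ a :: A₂) ++ [c])) ::ₘ S')
        = oc ((A₂ ++ c :: A₁) ++ [a]) ::ₘ S')
    (hy : ((oc (d :: (B₁ ++ b :: B₂))) ::ₘ S'')
        = oc (b :: (B₂ ++ d :: B₁)) ::ₘ S'')
    (h₂ : ((oc ((A₂ ++ c :: A₁) ++ (B₂ ++ d :: B₁))) ::ₘ (S' + S''))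
        = oc (c :: (A₁ ++ B₂) ++ d :: (B₁ ++ A₂)) ::ₘ (S' + S''))
    (hI : ((oc (A₁ ++ B₂)) ::ₘ oc (B₁ ++ A₂) ::ₘ (S' + S''))
        = oc (A₂ ++ B₁) ::ₘ oc (B₂ ++ A₁) ::ₘ (S' + S'')),
    xiSame (A₂ ++ B₁) (B₂ ++ A₁) a b (S' + S'') (g' + g'')
        (toNsModData.pcast h₁ rfl
          (comp (A₁ ++ a :: A₂) (B₁ ++ b :: B₂) c d S' S'' g' g'' x y))
      = toNsModData.pcast hI rfl
          (xiSame (A₁ ++ B₂) (B₁ ++ A₂) c d (S' + S'') (g' + g'')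
            (toNsModData.pcast h₂ rfl
              (comp (A₂ ++ c :: A₁) (B₂ ++ d :: B₁) a b S' S'' g' g''
                (toNsModData.pcast hx rfl x) (toNsModData.pcast hy rfl y))))
  /-- (v) interchange between a composition and a contraction of the first
  factor. -/
  comp_xi : ∀ (W Y J₁ J₂ : List ℕ) (a b c d : ℕ) (S' S'' : MCyc) g' g''
    (x : P (oc (W ++ [a]) ::ₘ oc (c :: J₁ ++ d :: J₂) ::ₘ S') g')
    (y : P (oc (b :: Y) ::ₘ S'') g'')
    (h₁ : ((oc (W ++ [a])) ::ₘ oc (c :: J₁ ++ d :: J₂) ::ₘ S')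
        = oc (c :: J₁ ++ d :: J₂) ::ₘ oc (W ++ [a]) ::ₘ S')
    (h₂ : ((oc J₁) ::ₘ oc J₂ ::ₘ oc (W ++ [a]) ::ₘ S')
        = oc (W ++ [a]) ::ₘ oc J₁ ::ₘ oc J₂ ::ₘ S')
    (h₃ : ((oc (W ++ Y)) ::ₘ ((oc (c :: J₁ ++ d :: J₂) ::ₘ S') + S''))
        = oc (c :: J₁ ++ d :: J₂) ::ₘ oc (W ++ Y) ::ₘ (S' + S''))
    (hI : ((oc J₁) ::ₘ oc J₂ ::ₘ oc (W ++ Y) ::ₘ (S' + S''))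
        = oc (W ++ Y) ::ₘ ((oc J₁ ::ₘ oc J₂ ::ₘ S') + S''))
    (hg : (g' + g'') + 1 = (g' + 1) + g''),
    comp W Y a b (oc J₁ ::ₘ oc J₂ ::ₘ S') S'' (g' + 1) g''
        (toNsModData.pcast h₂ rfl
          (xiSame J₁ J₂ c d (oc (W ++ [a]) ::ₘ S') g'
            (toNsModData.pcast h₁ rfl x))) y
      = toNsModData.pcast hI hg
          (xiSame J₁ J₂ c d (oc (W ++ Y) ::ₘ (S' + S'')) (g' + g'')
            (toNsModData.pcast h₃ rfl
              (comp W Y a b (oc (c :: J₁ ++ d :: J₂) ::ₘ S') S'' g' g'' x y)))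
  /-- (vi) equivariance of the compositions. -/
  ren_comp : ∀ (σ : ℕ → ℕ) (hσ : Function.Injective σ)
    (X Y : List ℕ) (u v : ℕ) (S' S'' : MCyc) g' g''
    (x : P (oc (X ++ [u]) ::ₘ S') g') (y : P (oc (v :: Y) ::ₘ S'') g'')
    (hx : (((oc (X ++ [u])) ::ₘ S').map (Cycle.map σ))
        = oc ((X.map σ) ++ [σ u]) ::ₘ (S'.map (Cycle.map σ)))
    (hy : (((oc (v :: Y)) ::ₘ S'').map (Cycle.map σ))
        = oc (σ v :: Y.map σ) ::ₘ (S''.map (Cycle.map σ)))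
    (hI : ((oc (X.map σ ++ Y.map σ))
            ::ₘ (S'.map (Cycle.map σ) + S''.map (Cycle.map σ)))
        = (((oc (X ++ Y)) ::ₘ (S' + S'')).map (Cycle.map σ))),
    ren σ hσ _ _ (comp X Y u v S' S'' g' g'' x y)
      = toNsModData.pcast hI rfl
          (comp (X.map σ) (Y.map σ) (σ u) (σ v)
            (S'.map (Cycle.map σ)) (S''.map (Cycle.map σ)) g' g''
            (toNsModData.pcast hx rfl (ren σ hσ _ g' x))
            (toNsModData.pcast hy rfl (ren σ hσ _ g'' y)))
  /-- (vii) equivariance of the contractions. -/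
  ren_xi : ∀ (σ : ℕ → ℕ) (hσ : Function.Injective σ)
    (I₁ I₂ : List ℕ) (u v : ℕ) (S : MCyc) g
    (x : P (oc (u :: I₁ ++ v :: I₂) ::ₘ S) g)
    (hx : (((oc (u :: I₁ ++ v :: I₂)) ::ₘ S).map (Cycle.map σ))
        = oc (σ u :: I₁.map σ ++ σ v :: I₂.map σ) ::ₘ (S.map (Cycle.map σ)))
    (hI : ((oc (I₁.map σ)) ::ₘ oc (I₂.map σ) ::ₘ (S.map (Cycle.map σ)))
        = (((oc I₁) ::ₘ oc I₂ ::ₘ S).map (Cycle.map σ))),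
    ren σ hσ _ _ (xiSame I₁ I₂ u v S g x)
      = toNsModData.pcast hI rfl
          (xiSame (I₁.map σ) (I₂.map σ) (σ u) (σ v) (S.map (Cycle.map σ)) g
            (toNsModData.pcast hx rfl (ren σ hσ _ g x)))

/-!
Compose `ς([A₁ a A₂ c])` with `ς([d B₁ b B₂])`. By multiplicativity, contracting the
composite along `a, b` is `ξ_{ab} ς([a A₂B₁ b B₂A₁])`, while by the interchange axiom (iv)
it equals the contraction along `c, d` of the composite along `a, b`, which is
`ξ_{cd} ς([c A₁B₂ d B₁A₂])`. Choosing the blocks `A₁, A₂, B₁, B₂` suitably, the genus-one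
element is symmetric in its two boundary cycles and invariant under rotating one of them,
whatever the names of the contracted pair.
-/

lemma NsModData.pcast_heq (O : NsModData) {S T : MCyc} {g h : ℕ} (hS : S = T) (hg : g = h)
    (x : O.P S g) : HEq (O.pcast hS hg x) x := by
  subst hS hg
  rfl

lemma oc_append_comm (l₁ l₂ : List ℕ) : oc (l₁ ++ l₂) = oc (l₂ ++ l₁) :=
  Quotient.sound List.isRotated_append

namespace NsModOp

variable {O : NsModOp} (ς : ∀ c : Cycle ℕ, O.P {c} 0)

def xiSigma (I₁ I₂ : List ℕ) (a b : ℕ) : O.P (oc I₁ ::ₘ oc I₂ ::ₘ 0) 1 :=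
  O.xiSame I₁ I₂ a b 0 0 (ς (oc (a :: I₁ ++ b :: I₂)))

def IsMultiplicative : Prop :=
  ∀ (Xl Yl : List ℕ) (u v : ℕ),
    HEq (O.comp Xl Yl u v 0 0 0 0 (ς (oc (Xl ++ [u]))) (ς (oc (v :: Yl)))) (ς (oc (Xl ++ Yl)))

variable {ς}

lemma xiSame_heq_xiSigma {I₁ I₂ : List ℕ} {a b : ℕ} {x : O.P (oc (a :: I₁ ++ b :: I₂) ::ₘ 0) 0}
    (hx : HEq x (ς (oc (a :: I₁ ++ b :: I₂)))) :
    HEq (O.xiSame I₁ I₂ a b 0 0 x) (xiSigma ς I₁ I₂ a b) := by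
  cases eq_of_heq hx
  rfl

lemma IsMultiplicative.comp_heq (hς : IsMultiplicative ς) {Xl Yl : List ℕ} {u v : ℕ}
    {x : O.P (oc (Xl ++ [u]) ::ₘ 0) 0} {y : O.P (oc (v :: Yl) ::ₘ 0) 0}
    (hx : HEq x (ς (oc (Xl ++ [u])))) (hy : HEq y (ς (oc (v :: Yl)))) {c : Cycle ℕ}
    (hc : oc (Xl ++ Yl) = c) : HEq (O.comp Xl Yl u v 0 0 0 0 x y) (ς c) := by
  cases eq_of_heq hx
  cases eq_of_heq hy
  exact (hς Xl Yl u v).trans (congr_arg_heq ς hc)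

lemma IsMultiplicative.xiSigma_interchange (hς : IsMultiplicative ς)
    (A₁ A₂ B₁ B₂ : List ℕ) (a b c d : ℕ) :
    HEq (xiSigma ς (A₂ ++ B₁) (B₂ ++ A₁) a b) (xiSigma ς (A₁ ++ B₂) (B₁ ++ A₂) c d) := by
  have ex : oc ((A₁ ++ a :: A₂) ++ [c]) = oc ((A₂ ++ c :: A₁) ++ [a]) := by
    convert oc_append_comm (A₁ ++ [a]) (A₂ ++ [c]) using 2 <;> simp
  have ey : oc (d :: (B₁ ++ b :: B₂)) = oc (b :: (B₂ ++ d :: B₁)) := by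
    convert oc_append_comm (d :: B₁) (b :: B₂) using 2 <;> simp
  have e₁ : oc ((A₁ ++ a :: A₂) ++ (B₁ ++ b :: B₂)) = oc (a :: (A₂ ++ B₁) ++ b :: (B₂ ++ A₁)) := by
    convert oc_append_comm A₁ (a :: (A₂ ++ B₁) ++ b :: B₂) using 2 <;> simp
  have e₂ : oc ((A₂ ++ c :: A₁) ++ (B₂ ++ d :: B₁)) = oc (c :: (A₁ ++ B₂) ++ d :: (B₁ ++ A₂)) := by
    convert oc_append_comm A₂ (c :: (A₁ ++ B₂) ++ d :: B₁) using 2 <;> simp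
  have hI : oc (A₁ ++ B₂) ::ₘ oc (B₁ ++ A₂) ::ₘ ((0 : MCyc) + 0)
      = oc (A₂ ++ B₁) ::ₘ oc (B₂ ++ A₁) ::ₘ ((0 : MCyc) + 0) := by
    rw [oc_append_comm A₁, oc_append_comm B₁, Multiset.cons_swap]
  have key := O.xi_comp A₁ A₂ B₁ B₂ a b c d 0 0 0 0 (ς _) (ς _) (by rw [e₁]) (by rw [ex])
    (by rw [ey]) (by rw [e₂]) hI
  refine (xiSame_heq_xiSigma ?_).symm.trans
    ((heq_of_eq key).trans ((NsModData.pcast_heq _ _ _ _).trans (xiSame_heq_xiSigma ?_)))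
  · exact (NsModData.pcast_heq _ _ _ _).trans (hς.comp_heq HEq.rfl HEq.rfl e₁)
  · exact (NsModData.pcast_heq _ _ _ _).trans
      (hς.comp_heq ((NsModData.pcast_heq _ _ _ _).trans (congr_arg_heq ς ex))
        ((NsModData.pcast_heq _ _ _ _).trans (congr_arg_heq ς ey)) e₂)

lemma IsMultiplicative.xiSigma_swap (hς : IsMultiplicative ς) (I₁ I₂ : List ℕ) (a b c d : ℕ) :
    HEq (xiSigma ς I₁ I₂ a b) (xiSigma ς I₂ I₁ c d) := by
  have h := hς.xiSigma_interchange [] I₁ [] I₂ a b c d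
  rwa [List.append_nil, List.append_nil, List.nil_append, List.nil_append] at h

lemma IsMultiplicative.xiSigma_rotate (hς : IsMultiplicative ς) (I X₁ X₂ : List ℕ)
    (a b c d : ℕ) : HEq (xiSigma ς I (X₂ ++ X₁) a b) (xiSigma ς I (X₁ ++ X₂) c d) := by
  have h := hς.xiSigma_interchange X₁ I [] X₂ a b c d
  rw [List.append_nil, List.nil_append] at h
  exact h.trans (hς.xiSigma_swap _ _ c d c d)

end NsModOp

theorem stmt19_general (O : NsModOp) (ς : ∀ c : Cycle ℕ, O.P {c} 0)
    (hmul : ∀ (Xl Yl : List ℕ) (u v : ℕ)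
      (h : ((oc (Xl ++ Yl)) ::ₘ ((0 : MCyc) + 0)) = {oc (Xl ++ Yl)})
      (hg : (0 : ℕ) + 0 = 0),
      O.comp Xl Yl u v 0 0 0 0 (ς (oc (Xl ++ [u]))) (ς (oc (v :: Yl)))
        = O.toNsModData.pcast h.symm hg.symm (ς (oc (Xl ++ Yl))))
    (X₁ X₂ Y : List ℕ) (u' u'' v' v'' : ℕ)
    (h₁ : ({oc (X₂ ++ X₁ ++ u' :: (Y ++ [u'']))} : MCyc)
        = oc (u' :: Y ++ u'' :: (X₂ ++ X₁)) ::ₘ 0)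
    (h₂ : ({oc (X₁ ++ X₂ ++ v'' :: (Y ++ [v']))} : MCyc)
        = oc (v'' :: Y ++ v' :: (X₁ ++ X₂)) ::ₘ 0)
    (h₃ : ((oc Y) ::ₘ oc (X₁ ++ X₂) ::ₘ (0 : MCyc))
        = oc Y ::ₘ oc (X₂ ++ X₁) ::ₘ 0) :
    O.xiSame Y (X₂ ++ X₁) u' u'' 0 0
        (O.toNsModData.pcast h₁ rfl (ς (oc (X₂ ++ X₁ ++ u' :: (Y ++ [u''])))))
      = O.toNsModData.pcast h₃ rfl
          (O.xiSame Y (X₁ ++ X₂) v'' v' 0 0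
            (O.toNsModData.pcast h₂ rfl (ς (oc (X₁ ++ X₂ ++ v'' :: (Y ++ [v'])))))) := by
  have hς : NsModOp.IsMultiplicative ς := fun Xl Yl u v =>
    (heq_of_eq (hmul Xl Yl u v rfl rfl)).trans (NsModData.pcast_heq _ _ _ _)
  have e₁ : oc (X₂ ++ X₁ ++ u' :: (Y ++ [u''])) = oc (u' :: Y ++ u'' :: (X₂ ++ X₁)) := by
    convert oc_append_comm (X₂ ++ X₁) (u' :: Y ++ [u'']) using 2 <;> simp
  have e₂ : oc (X₁ ++ X₂ ++ v'' :: (Y ++ [v'])) = oc (v'' :: Y ++ v' :: (X₁ ++ X₂)) := by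
    convert oc_append_comm (X₁ ++ X₂) (v'' :: Y ++ [v']) using 2 <;> simp
  refine eq_of_heq ((NsModOp.xiSame_heq_xiSigma ?_).trans
    ((hς.xiSigma_rotate Y X₁ X₂ u' u'' v'' v').trans
      ((NsModOp.xiSame_heq_xiSigma ?_).symm.trans (NsModData.pcast_heq _ _ _ _).symm)))
  · exact (NsModData.pcast_heq _ _ _ _).trans (congr_arg_heq ς e₁)
  · exact (NsModData.pcast_heq _ _ _ _).trans (congr_arg_heq ς e₂)

/-- Let `ς` be an internal non-Σ cyclic operad in a non-Σ modular operad `O`: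
a family `ς(C) ∈ P(C; 0)`, one for each cyclically ordered finite set `C`,
equivariant under relabelling (`hequiv`) and multiplicative under the
compositions `∘_{u,v}` (`hmul`).  Then for ordered sets `X = X₁X₂`, `Y` and
distinct fresh symbols `u', u'', v', v''`, the genus-one element
`ξ_{u'u''} ς([X₂X₁ u' Y u''])` of `P([X], [Y]; 1)` equals
`ξ_{v'v''} ς([X₁X₂ v'' Y v'])`: it depends only on the cyclic orders `[X]`,
`[Y]`, not on the chosen linear representatives. -/
theorem stmt19 (O : NsModOp) (ς : ∀ c : Cycle ℕ, O.P {c} 0)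
    (hequiv : ∀ (σ : ℕ → ℕ) (hσ : Function.Injective σ) (c : Cycle ℕ)
      (h : ({c} : MCyc).map (Cycle.map σ) = {c.map σ}),
      O.toNsModData.pcast h rfl (O.ren σ hσ {c} 0 (ς c)) = ς (c.map σ))
    (hmul : ∀ (Xl Yl : List ℕ) (u v : ℕ)
      (h : ((oc (Xl ++ Yl)) ::ₘ ((0 : MCyc) + 0)) = {oc (Xl ++ Yl)})
      (hg : (0 : ℕ) + 0 = 0),
      O.comp Xl Yl u v 0 0 0 0 (ς (oc (Xl ++ [u]))) (ς (oc (v :: Yl)))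
        = O.toNsModData.pcast h.symm hg.symm (ς (oc (Xl ++ Yl))))
    (X₁ X₂ Y : List ℕ) (u' u'' v' v'' : ℕ)
    (hnd : (X₁ ++ X₂ ++ Y ++ [u', u'', v', v'']).Nodup)
    (h₁ : ({oc (X₂ ++ X₁ ++ u' :: (Y ++ [u'']))} : MCyc)
        = oc (u' :: Y ++ u'' :: (X₂ ++ X₁)) ::ₘ 0)
    (h₂ : ({oc (X₁ ++ X₂ ++ v'' :: (Y ++ [v']))} : MCyc)
        = oc (v'' :: Y ++ v' :: (X₁ ++ X₂)) ::ₘ 0)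
    (h₃ : ((oc Y) ::ₘ oc (X₁ ++ X₂) ::ₘ (0 : MCyc))
        = oc Y ::ₘ oc (X₂ ++ X₁) ::ₘ 0) :
    O.xiSame Y (X₂ ++ X₁) u' u'' 0 0
        (O.toNsModData.pcast h₁ rfl (ς (oc (X₂ ++ X₁ ++ u' :: (Y ++ [u''])))))
      = O.toNsModData.pcast h₃ rfl
          (O.xiSame Y (X₁ ++ X₂) v'' v' 0 0
            (O.toNsModData.pcast h₂ rfl (ς (oc (X₁ ++ X₂ ++ v'' :: (Y ++ [v'])))))) :=
  stmt19_general O ς hmul X₁ X₂ Y u' u'' v' v'' h₁ h₂ h₃
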